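/- arXiv:1606.01512 — 2 statements merged into one kernel-verified Lean document; each statement's English description precedes it below -/
import Mathlib

section
/- For every t ≠ 0, every Schwartz function f : ℝ^d → ℂ, and every x ∈ ℝ^d, one has the kernel representation (e^{itΔ}f)(x) = (4πit)^{−d/2} ∫_{ℝ^d} e^{i|x−y|²/(4t)} f(y) dy, where (4πit)^{−d/2} := (4π|t|)^{−d/2} e^{−i·sgn(t)·dπ/4} is the principal branch value. -/
open MeasureTheory

noncomputable section

/-- The Fourier transform `𝓕f(ξ) = (2π)^{-d/2} ∫ e^{-ix·ξ} f(x) dx`. -/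
def fourierT {d : ℕ} (f : EuclideanSpace ℝ (Fin d) → ℂ) (ξ : EuclideanSpace ℝ (Fin d)) : ℂ :=
  (((2 * Real.pi) ^ (-(d : ℝ) / 2) : ℝ) : ℂ) *
    ∫ x : EuclideanSpace ℝ (Fin d), Complex.exp (-Complex.I * ((inner ℝ x ξ : ℝ) : ℂ)) * f x

/-- The inverse Fourier transform `𝓕⁻¹g(x) = (2π)^{-d/2} ∫ e^{ix·ξ} g(ξ) dξ`. -/
def invFourierT {d : ℕ} (g : EuclideanSpace ℝ (Fin d) → ℂ) (x : EuclideanSpace ℝ (Fin d)) : ℂ :=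
  (((2 * Real.pi) ^ (-(d : ℝ) / 2) : ℝ) : ℂ) *
    ∫ ξ : EuclideanSpace ℝ (Fin d), Complex.exp (Complex.I * ((inner ℝ x ξ : ℝ) : ℂ)) * g ξ

/-- The free Schrödinger propagator `e^{itΔ}f = 𝓕⁻¹(e^{-it|ξ|²} 𝓕f)`. -/
def schrodingerProp {d : ℕ} (t : ℝ) (f : EuclideanSpace ℝ (Fin d) → ℂ) :
    EuclideanSpace ℝ (Fin d) → ℂ :=
  invFourierT (fun ξ => Complex.exp (-Complex.I * (t : ℂ) * ((‖ξ‖ ^ 2 : ℝ) : ℂ)) * fourierT f ξ)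

/-!
Replace the multiplier `e^{-it|ξ|²}` by a Gaussian `e^{-b|ξ|²}` with `Re b > 0`. Then the double
integral `∫ e^{ix·ξ - b|ξ|²} ∫ e^{-iy·ξ} f(y) dy dξ` converges absolutely, and Fubini together with
the Fourier transform of the Gaussian turns it into `(π/b)^{d/2} ∫ e^{-|x-y|²/(4b)} f(y) dy`.
Letting `b → it` inside the right half-plane, dominated convergence applies on both sides since
every exponential involved has modulus at most one, and the principal value of `(π/(it))^{d/2}`
produces the phase `e^{-i sgn(t) dπ/4}`.
-/

open Complex Filter
open scoped Real Topology RealInnerProductSpace FourierTransform SchwartzMap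

theorem tendsto_integral_cexp_mul_of_re_nonpos {α ι : Type*} [MeasurableSpace α] {μ : Measure α}
    {l : Filter ι} [l.IsCountablyGenerated] {F : ι → α → ℂ} {F₀ : α → ℂ} {g : α → ℂ}
    (hF : ∀ᶠ i in l, AEStronglyMeasurable (F i) μ) (hre : ∀ᶠ i in l, ∀ a, (F i a).re ≤ 0)
    (hlim : ∀ a, Tendsto (fun i => F i a) l (𝓝 (F₀ a))) (hg : Integrable g μ) :
    Tendsto (fun i => ∫ a, cexp (F i a) * g a ∂μ) l (𝓝 (∫ a, cexp (F₀ a) * g a ∂μ)) := by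
  refine tendsto_integral_filter_of_dominated_convergence (fun a => ‖g a‖) ?_ ?_ hg.norm ?_
  · filter_upwards [hF] with i hi
    exact (continuous_exp.comp_aestronglyMeasurable hi).mul hg.aestronglyMeasurable
  · filter_upwards [hre] with i hi
    refine .of_forall fun a => ?_
    rw [norm_mul, norm_exp]
    exact mul_le_of_le_one_left (norm_nonneg _) (Real.exp_le_one_iff.mpr (hi a))
  · exact .of_forall fun a => ((continuous_exp.tendsto _).comp (hlim a)).mul tendsto_const_nhds

section Limits

variable {V : Type*} [NormedAddCommGroup V] [MeasurableSpace V] [BorelSpace V] {ι : Type*}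
  {l : Filter ι} [l.IsCountablyGenerated] {b : ι → ℂ} {b₀ : ℂ}

theorem tendsto_integral_cexp_neg_mul_sq_norm_add_mul [InnerProductSpace ℝ V] {μ : Measure V}
    (hb : Tendsto b l (𝓝 b₀)) (hre : ∀ᶠ i in l, 0 ≤ (b i).re) {g : V → ℂ} (hg : Integrable g μ)
    (x : V) :
    Tendsto (fun i => ∫ ξ, cexp (-b i * ‖ξ‖ ^ 2 + I * ⟪x, ξ⟫) * g ξ ∂μ) l
      (𝓝 (∫ ξ, cexp (-b₀ * ‖ξ‖ ^ 2 + I * ⟪x, ξ⟫) * g ξ ∂μ)) := by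
  refine tendsto_integral_cexp_mul_of_re_nonpos (.of_forall fun i => ?_) ?_
    (fun ξ => ((hb.neg.mul tendsto_const_nhds).add tendsto_const_nhds)) hg
  · exact Continuous.aestronglyMeasurable (by fun_prop)
  · filter_upwards [hre] with i hi ξ
    have : (-b i * ‖ξ‖ ^ 2 + I * ⟪x, ξ⟫).re = -((b i).re * ‖ξ‖ ^ 2) := by
      simp [← ofReal_pow, mul_re]
    rw [this, neg_nonpos]
    positivity

theorem tendsto_integral_cexp_neg_sq_norm_sub_div_mul {μ : Measure V} (hb : Tendsto b l (𝓝 b₀))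
    (hb₀ : b₀ ≠ 0) (hre : ∀ᶠ i in l, 0 ≤ (b i).re) {f : V → ℂ} (hf : Integrable f μ) (x : V) :
    Tendsto (fun i => ∫ y, cexp (-((‖x - y‖ ^ 2 : ℝ) : ℂ) / (4 * b i)) * f y ∂μ) l
      (𝓝 (∫ y, cexp (-((‖x - y‖ ^ 2 : ℝ) : ℂ) / (4 * b₀)) * f y ∂μ)) := by
  refine tendsto_integral_cexp_mul_of_re_nonpos (.of_forall fun i => ?_) ?_
    (fun y => tendsto_const_nhds.div (tendsto_const_nhds.mul hb) (by simpa using hb₀)) hf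
  · exact Continuous.aestronglyMeasurable (by fun_prop)
  · filter_upwards [hre] with i hi y
    rw [div_eq_mul_inv, ← ofReal_neg, re_ofReal_mul, inv_re]
    refine mul_nonpos_of_nonpos_of_nonneg (by simp) (div_nonneg ?_ (normSq_nonneg _))
    simpa using hi

end Limits

section Gaussian

variable {V : Type*} [NormedAddCommGroup V] [InnerProductSpace ℝ V] [FiniteDimensional ℝ V]
  [MeasurableSpace V] [BorelSpace V] {f : V → ℂ} {b : ℂ}

theorem integrable_gaussian_mul_fourier_kernel (hf : Integrable f) (hb : 0 < b.re) (x : V) :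
    Integrable (Function.uncurry fun ξ y : V =>
      cexp (-b * ‖ξ‖ ^ 2 + I * ⟪x, ξ⟫) * (cexp (-I * ⟪y, ξ⟫) * f y)) (volume.prod volume) := by
  have hG := GaussianFourier.integrable_cexp_neg_mul_sq_norm_add hb I x
  have hphase : Continuous fun p : V × V => cexp (-I * ⟪p.2, p.1⟫) := by fun_prop
  refine ((hG.mul_prod hf).bdd_mul (c := 1) hphase.aestronglyMeasurable
    (.of_forall fun p => ?_)).congr (.of_forall fun ⟨ξ, y⟩ => ?_)
  · simp [norm_exp]
  · simp only [Function.uncurry_apply_pair]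
    ring

theorem integral_gaussian_mul_integral_fourier_kernel (hf : Integrable f) (hb : 0 < b.re) (x : V) :
    ∫ ξ, cexp (-b * ‖ξ‖ ^ 2 + I * ⟪x, ξ⟫) * ∫ y, cexp (-I * ⟪y, ξ⟫) * f y
      = (π / b) ^ (Module.finrank ℝ V / 2 : ℂ) *
          ∫ y, cexp (-((‖x - y‖ ^ 2 : ℝ) : ℂ) / (4 * b)) * f y := by
  have hkernel : ∀ y, ∫ ξ, cexp (-b * ‖ξ‖ ^ 2 + I * ⟪x, ξ⟫) * (cexp (-I * ⟪y, ξ⟫) * f y)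
      = (π / b) ^ (Module.finrank ℝ V / 2 : ℂ) *
          (cexp (-((‖x - y‖ ^ 2 : ℝ) : ℂ) / (4 * b)) * f y) := by
    intro y
    have hexp : ∀ ξ, cexp (-b * ‖ξ‖ ^ 2 + I * ⟪x, ξ⟫) * (cexp (-I * ⟪y, ξ⟫) * f y)
        = cexp (-b * ‖ξ‖ ^ 2 + I * ⟪x - y, ξ⟫) * f y := by
      intro ξ
      rw [← mul_assoc, ← Complex.exp_add, inner_sub_left, ofReal_sub]
      ring_nf
    simp_rw [hexp]
    rw [integral_mul_const, GaussianFourier.integral_cexp_neg_mul_sq_norm_add hb, I_sq, mul_assoc]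
    push_cast
    ring_nf
  simp_rw [← integral_const_mul]
  rw [integral_integral_swap (integrable_gaussian_mul_fourier_kernel hf hb x)]
  simp_rw [hkernel]

end Gaussian

theorem ofReal_div_I_mul (a t : ℝ) : (a : ℂ) / (I * t) = ((-(a / t) : ℝ) : ℂ) * I := by
  rw [mul_comm, ← div_div, div_I, ofReal_neg, ofReal_div, neg_mul]

theorem cpow_ofReal_div_I_mul {a : ℝ} (ha : 0 < a) {t : ℝ} (ht : t ≠ 0) (s : ℝ) :
    ((a : ℂ) / (I * t)) ^ (s : ℂ) = ((a / |t|) ^ s : ℝ) * cexp (-I * Real.sign t * s * π / 2) := by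
  have hz := ofReal_div_I_mul a t
  have harg : arg ((a : ℂ) / (I * t)) = -Real.sign t * (π / 2) := by
    rcases ht.lt_or_gt with h | h
    · rw [hz, arg_real_mul _ (by rw [neg_pos]; exact div_neg_of_pos_of_neg ha h), arg_I,
        Real.sign_of_neg h]
      ring
    · rw [hz, show ((-(a / t) : ℝ) : ℂ) * I = ((a / t : ℝ) : ℂ) * -I by push_cast; ring,
        arg_real_mul _ (div_pos ha h), arg_neg_I, Real.sign_of_pos h]
      ring
  have hnorm : ‖(a : ℂ) / (I * t)‖ = a / |t| := by
    simp [abs_of_pos ha]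
  rw [cpow_ofReal, hnorm, harg]
  push_cast
  rw [← exp_mul_I]
  ring_nf

theorem two_pi_rpow_neg_mul_self_mul_pi_div_rpow {τ : ℝ} (hτ : 0 < τ) (s : ℝ) :
    (2 * π) ^ (-s) * (2 * π) ^ (-s) * (π / τ) ^ s = (4 * π * τ) ^ (-s) := by
  have hπ := Real.pi_pos
  rw [← inv_div, Real.inv_rpow (by positivity), ← Real.rpow_neg (by positivity),
    ← Real.mul_rpow (by positivity) (by positivity),
    ← Real.mul_rpow (by positivity) (by positivity)]
  congr 1
  field_simp
  ring

theorem fourierT_eq_fourier {d : ℕ} (f : EuclideanSpace ℝ (Fin d) → ℂ)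
    (ξ : EuclideanSpace ℝ (Fin d)) :
    fourierT f ξ = (((2 * π) ^ (-(d : ℝ) / 2) : ℝ) : ℂ) * 𝓕 f ((2 * π)⁻¹ • ξ) := by
  rw [fourierT, Real.fourier_eq']
  congr 1
  refine integral_congr_ae (.of_forall fun v => ?_)
  simp only [smul_eq_mul, real_inner_smul_right]
  push_cast
  field_simp

theorem integrable_fourierT {d : ℕ} (f : 𝓢(EuclideanSpace ℝ (Fin d), ℂ)) :
    Integrable (fourierT f) := by
  have h := ((𝓕 f).integrable (μ := volume).comp_smul (inv_ne_zero Real.two_pi_pos.ne')).const_mul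
    (((2 * π) ^ (-(d : ℝ) / 2) : ℝ) : ℂ)
  simpa only [SchwartzMap.fourier_coe, ← fourierT_eq_fourier] using h

theorem integral_gaussian_mul_fourierT {d : ℕ} {f : EuclideanSpace ℝ (Fin d) → ℂ}
    (hf : Integrable f) {b : ℂ} (hb : 0 < b.re) (x : EuclideanSpace ℝ (Fin d)) :
    ∫ ξ, cexp (-b * ‖ξ‖ ^ 2 + I * ⟪x, ξ⟫) * fourierT f ξ
      = (((2 * π) ^ (-(d : ℝ) / 2) : ℝ) : ℂ) * ((π / b) ^ ((d : ℂ) / 2) *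
          ∫ y, cexp (-((‖x - y‖ ^ 2 : ℝ) : ℂ) / (4 * b)) * f y) := by
  simp_rw [fourierT, mul_left_comm _ (((2 * π) ^ (-(d : ℝ) / 2) : ℝ) : ℂ), integral_const_mul,
    integral_gaussian_mul_integral_fourier_kernel hf hb, finrank_euclideanSpace_fin]

theorem schrodingerProp_apply {d : ℕ} (t : ℝ) (f : EuclideanSpace ℝ (Fin d) → ℂ)
    (x : EuclideanSpace ℝ (Fin d)) :
    schrodingerProp t f x = (((2 * π) ^ (-(d : ℝ) / 2) : ℝ) : ℂ) *
      ∫ ξ, cexp (-(I * t) * ‖ξ‖ ^ 2 + I * ⟪x, ξ⟫) * fourierT f ξ := by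
  simp_rw [schrodingerProp, invFourierT, ← mul_assoc, ← Complex.exp_add]
  congr 3 with ξ
  push_cast
  ring_nf

theorem neg_div_four_mul_I_mul (r t : ℂ) : -r / (4 * (I * t)) = I * r / (4 * t) := by
  rw [mul_left_comm, ← div_div, div_I]
  ring

/-- Kernel representation of the free Schrödinger propagator:
`(e^{itΔ}f)(x) = (4πit)^{-d/2} ∫ e^{i|x-y|²/(4t)} f(y) dy`, with the principal branch
`(4πit)^{-d/2} = (4π|t|)^{-d/2} e^{-i·sgn(t)·dπ/4}`. -/
theorem schrodingerProp_kernel_repr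
    (d : ℕ) (t : ℝ) (ht : t ≠ 0) (f : SchwartzMap (EuclideanSpace ℝ (Fin d)) ℂ)
    (x : EuclideanSpace ℝ (Fin d)) :
    schrodingerProp t (⇑f) x
      = (((4 * Real.pi * |t|) ^ (-(d : ℝ) / 2) : ℝ) : ℂ) *
          Complex.exp (-Complex.I * (Real.sign t : ℂ) * (d : ℂ) * (Real.pi : ℂ) / 4) *
          ∫ y : EuclideanSpace ℝ (Fin d),
            Complex.exp (Complex.I * ((‖x - y‖ ^ 2 : ℝ) : ℂ) / (4 * (t : ℂ))) * f y := by
  set l := 𝓝[{z : ℂ | 0 < z.re}] (I * t)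
  have hre : ∀ᶠ b in l, 0 < b.re := self_mem_nhdsWithin
  have hb : Tendsto id l (𝓝 (I * t)) := nhdsWithin_le_nhds
  have : l.NeBot := mem_closure_iff_nhdsWithin_neBot.mp (by simp [closure_setOfPred_lt_re])
  have hIt : I * t ≠ 0 := mul_ne_zero I_ne_zero (ofReal_ne_zero.mpr ht)
  have hcpow :
      Tendsto (fun b : ℂ => (π / b) ^ ((d : ℂ) / 2)) l (𝓝 ((π / (I * t)) ^ ((d : ℂ) / 2))) := by
    have hslit : (π : ℂ) / (I * t) ∈ slitPlane := by
      rw [ofReal_div_I_mul]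
      exact Or.inr (by simp [ht, Real.pi_ne_zero])
    exact (continuousAt_cpow_const hslit).tendsto.comp (tendsto_const_nhds.div hb hIt)
  have hf : Integrable f := f.integrable
  have hdamped := tendsto_integral_cexp_neg_mul_sq_norm_add_mul hb (hre.mono fun _ => le_of_lt)
    (integrable_fourierT f) x
  have hkernel := tendsto_integral_cexp_neg_sq_norm_sub_div_mul hb hIt (hre.mono fun _ => le_of_lt)
    hf x
  have hlim := tendsto_nhds_unique
    (hdamped.congr' (hre.mono fun b hb => integral_gaussian_mul_fourierT hf hb x))
    (tendsto_const_nhds.mul (hcpow.mul hkernel))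
  rw [schrodingerProp_apply, hlim]
  simp_rw [neg_div_four_mul_I_mul]
  generalize ∫ y, cexp (I * ((‖x - y‖ ^ 2 : ℝ) : ℂ) / (4 * t)) * f y = K
  rw [show (d : ℂ) / 2 = ((d / 2 : ℝ) : ℂ) by push_cast; rfl, cpow_ofReal_div_I_mul Real.pi_pos ht,
    neg_div, ← two_pi_rpow_neg_mul_self_mul_pi_div_rpow (abs_pos.mpr ht)]
  push_cast
  ring_nf

end
end

section
/- Hölder's inequality in Lorentz spaces: let (Ω, μ) be a σ-finite measure space, let 1 ≤ q, q₁, q₂ < ∞ and 1 ≤ α, α₁, α₂ ≤ ∞ satisfy 1/q = 1/q₁ + 1/q₂ and 1/α = 1/α₁ + 1/α₂. Then there exists a constant C = C(q₁, q₂, α₁, α₂) such that for all measurable f, g : Ω → ℂ, ‖fg‖_{L^{q,α}} ≤ C ‖f‖_{L^{q₁,α₁}} ‖g‖_{L^{q₂,α₂}}. -/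
/-!
The layer-cake formula, applied via Fubini to the region `{(s, t) | t < μ {|f| > s}}`, shows that
`‖t^{1/q} f^*(t)‖_{L^α(dt/t)} = q^{1/α} ‖f‖_{L^{q,α}}`, where `f^*` is the decreasing
rearrangement. Since `(fg)^*(t) ≤ f^*(t/2) g^*(t/2)` and `dt/t` is invariant under dilations,
splitting `t^{1/q} = t^{1/q₁} t^{1/q₂}` and applying Hölder's inequality for `dt/t` with
`1/α = 1/α₁ + 1/α₂` gives the claim with `C = 2^{1/q} q₁^{1/α₁} q₂^{1/α₂}`.
-/

open MeasureTheory ENNReal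

noncomputable section

/-- The Lorentz quasinorm `‖f‖_{L^{q,α}}`: the `L^α`-norm, with respect to the measure
`dλ/λ` on `(0,∞)`, of the function `λ ↦ λ · μ({|f| > λ})^{1/q}` (with the supremum
interpretation when `α = ∞`). -/
def lorentzNorm {Ω : Type*} [MeasurableSpace Ω] (μ : Measure Ω) (q : ℝ) (α : ℝ≥0∞)
    (f : Ω → ℂ) : ℝ≥0∞ :=
  if α = ∞ then
    ⨆ lam ∈ Set.Ioi (0 : ℝ),
      ENNReal.ofReal lam * (μ {ω | lam < ‖f ω‖}) ^ (1 / q)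
  else
    (∫⁻ lam in Set.Ioi (0 : ℝ),
        (ENNReal.ofReal lam * (μ {ω | lam < ‖f ω‖}) ^ (1 / q)) ^ α.toReal *
          ENNReal.ofReal (1 / lam)) ^ (1 / α.toReal)

open Set

namespace Lorentz

section HaarLpNorm

variable {α : ℝ≥0∞} {F G : ℝ → ℝ≥0∞}

/-- `‖F‖_{L^α((0,∞), dt/t)}`. -/
def haarLpNorm (α : ℝ≥0∞) (F : ℝ → ℝ≥0∞) : ℝ≥0∞ :=
  if α = ∞ then ⨆ t ∈ Ioi (0 : ℝ), F t
  else (∫⁻ t in Ioi (0 : ℝ), F t ^ α.toReal * ENNReal.ofReal (1 / t)) ^ (1 / α.toReal)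

lemma haarLpNorm_top (F : ℝ → ℝ≥0∞) : haarLpNorm ∞ F = ⨆ t ∈ Ioi (0 : ℝ), F t := if_pos rfl

lemma haarLpNorm_of_ne_top (hα : α ≠ ∞) (F : ℝ → ℝ≥0∞) :
    haarLpNorm α F
      = (∫⁻ t in Ioi (0 : ℝ), F t ^ α.toReal * ENNReal.ofReal (1 / t)) ^ (1 / α.toReal) :=
  if_neg hα

lemma haarLpNorm_mono (h : ∀ t, 0 < t → F t ≤ G t) : haarLpNorm α F ≤ haarLpNorm α G := by
  unfold haarLpNorm
  split_ifs
  · exact iSup₂_mono h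
  · refine ENNReal.rpow_le_rpow (setLIntegral_mono' measurableSet_Ioi fun t ht => ?_)
      (by positivity)
    gcongr
    exact h t ht

lemma haarLpNorm_const_mul (hα : α ≠ 0) (hG : Measurable G) (c : ℝ≥0∞) :
    haarLpNorm α (fun t => c * G t) = c * haarLpNorm α G := by
  unfold haarLpNorm
  split_ifs with hαtop
  · simp_rw [ENNReal.mul_iSup]
  · have ha : 0 < α.toReal := ENNReal.toReal_pos hα hαtop
    simp_rw [ENNReal.mul_rpow_of_nonneg _ _ ha.le, mul_assoc]
    rw [lintegral_const_mul _ (by fun_prop), ENNReal.mul_rpow_of_nonneg _ _ (by positivity),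
      one_div, ENNReal.rpow_rpow_inv ha.ne']

lemma haarLpNorm_comp_mul_left {c : ℝ} (hc : 0 < c) :
    haarLpNorm α (fun t => G (c * t)) = haarLpNorm α G := by
  unfold haarLpNorm
  split_ifs
  · conv_rhs => rw [← image_const_mul_Ioi_zero hc, iSup_image]
  · conv_rhs => rw [← image_const_mul_Ioi_zero hc,
      lintegral_image_eq_lintegral_abs_deriv_mul measurableSet_Ioi
        (fun t _ => (hasDerivAt_id' t).const_mul c |>.hasDerivWithinAt)
        (mul_right_injective₀ hc.ne').injOn]
    refine congrArg (· ^ _) (setLIntegral_congr_fun measurableSet_Ioi fun t ht => ?_)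
    rw [mul_one, abs_of_pos hc, mul_left_comm, ← ENNReal.ofReal_mul hc.le,
      mul_one_div, div_mul_cancel_left₀ hc.ne', one_div]

lemma haarLpNorm_mul_le_iSup_mul (hα : α ≠ 0) (hG : Measurable G) :
    haarLpNorm α (F * G) ≤ (⨆ t ∈ Ioi (0 : ℝ), F t) * haarLpNorm α G := by
  rw [← haarLpNorm_const_mul hα hG]
  exact haarLpNorm_mono fun t ht =>
    mul_le_mul_left (le_iSup₂ (f := fun t (_ : t ∈ Ioi (0 : ℝ)) => F t) t ht) _

lemma haarLpNorm_mul_le {α₁ α₂ : ℝ≥0∞} (hα₁ : α₁ ≠ 0) (hα₂ : α₂ ≠ 0)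
    (hαe : 1 / α = 1 / α₁ + 1 / α₂) (hF : Measurable F) (hG : Measurable G) :
    haarLpNorm α (F * G) ≤ haarLpNorm α₁ F * haarLpNorm α₂ G := by
  rcases eq_or_ne α₁ ∞ with rfl | hα₁top
  · obtain rfl : α = α₂ := by simpa using hαe
    rw [haarLpNorm_top]
    exact haarLpNorm_mul_le_iSup_mul hα₂ hG
  rcases eq_or_ne α₂ ∞ with rfl | hα₂top
  · obtain rfl : α = α₁ := by simpa using hαe
    rw [mul_comm F, mul_comm (haarLpNorm α F), haarLpNorm_top]
    exact haarLpNorm_mul_le_iSup_mul hα₁ hF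
  have hinv : α.toReal⁻¹ = α₁.toReal⁻¹ + α₂.toReal⁻¹ := by
    simp only [one_div] at hαe
    rw [← toReal_inv, ← toReal_inv, ← toReal_inv, hαe,
      toReal_add (inv_ne_top.2 hα₁) (inv_ne_top.2 hα₂)]
  have ha₁ : 0 < α₁.toReal := toReal_pos hα₁ hα₁top
  have ha₂ : 0 < α₂.toReal := toReal_pos hα₂ hα₂top
  have ha : 0 < α.toReal := inv_pos.1 (by rw [hinv]; positivity)
  have hlt : α.toReal < α₁.toReal := by
    rw [← inv_lt_inv₀ ha₁ ha, hinv]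
    exact lt_add_of_pos_right _ (inv_pos.2 ha₂)
  set ν := (volume.restrict (Ioi (0 : ℝ))).withDensity fun t => ENNReal.ofReal (1 / t)
  have hν (H : ℝ → ℝ≥0∞) : ∫⁻ t in Ioi 0, H t * ENNReal.ofReal (1 / t) = ∫⁻ t, H t ∂ν := by
    rw [lintegral_withDensity_eq_lintegral_mul_non_measurable _ (by fun_prop)
      (ae_of_all _ fun _ => ofReal_lt_top)]
    simp only [Pi.mul_apply, mul_comm]
  rw [haarLpNorm_of_ne_top (toReal_pos_iff.1 ha).2.ne, haarLpNorm_of_ne_top hα₁top,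
    haarLpNorm_of_ne_top hα₂top, hν, hν, hν]
  exact lintegral_Lp_mul_le_Lq_mul_Lr ha hlt (by simpa only [one_div] using hinv) ν
    hF.aemeasurable hG.aemeasurable

end HaarLpNorm

section PowerIntegrals

variable {c : ℝ}

lemma lintegral_Ioo_ofReal_mul_rpow_sub_one (hc : 0 < c) {L : ℝ} (hL : 0 ≤ L) :
    ∫⁻ s in Ioo 0 L, ENNReal.ofReal (c * s ^ (c - 1)) = ENNReal.ofReal (L ^ c) := by
  have hint : IntegrableOn (fun s : ℝ => c * s ^ (c - 1)) (Ioc 0 L) :=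
    (intervalIntegrable_iff_integrableOn_Ioc_of_le hL).1
      ((intervalIntegral.intervalIntegrable_rpow' (by linarith)).const_mul c)
  have hnonneg : 0 ≤ᵐ[volume.restrict (Ioc 0 L)] fun s : ℝ => c * s ^ (c - 1) :=
    ae_restrict_of_forall_mem measurableSet_Ioc fun s hs => by have := hs.1; positivity
  rw [setLIntegral_congr Ioo_ae_eq_Ioc, ← ofReal_integral_eq_lintegral_ofReal hint hnonneg,
    ← intervalIntegral.integral_of_le hL, intervalIntegral.integral_const_mul,
    integral_rpow (Or.inl (by linarith)), sub_add_cancel, Real.zero_rpow hc.ne', sub_zero,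
    mul_div_cancel₀ _ hc.ne']

lemma lintegral_Ioi_ofReal_mul_rpow_sub_one (hc : 0 < c) :
    ∫⁻ s in Ioi 0, ENNReal.ofReal (c * s ^ (c - 1)) = ∞ := by
  refine ENNReal.eq_top_of_forall_nnreal_le fun r => ?_
  have hr : (0 : ℝ) ≤ (r : ℝ) ^ c⁻¹ := by positivity
  calc (r : ℝ≥0∞) = ENNReal.ofReal (((r : ℝ) ^ c⁻¹) ^ c) := by
        rw [Real.rpow_inv_rpow r.coe_nonneg hc.ne', ofReal_coe_nnreal]
    _ = ∫⁻ s in Ioo 0 ((r : ℝ) ^ c⁻¹), ENNReal.ofReal (c * s ^ (c - 1)) :=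
        (lintegral_Ioo_ofReal_mul_rpow_sub_one hc hr).symm
    _ ≤ _ := lintegral_mono_set Ioo_subset_Ioi_self

lemma lintegral_Ioi_ite_ofReal_lt (hc : 0 < c) (x : ℝ≥0∞) :
    ∫⁻ s in Ioi 0, (if ENNReal.ofReal s < x then ENNReal.ofReal (c * s ^ (c - 1)) else 0)
      = x ^ c := by
  have hS : MeasurableSet {s : ℝ | ENNReal.ofReal s < x} :=
    measurableSet_lt ENNReal.measurable_ofReal measurable_const
  have hind : (fun s => if ENNReal.ofReal s < x then ENNReal.ofReal (c * s ^ (c - 1)) else 0)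
      = {s | ENNReal.ofReal s < x}.indicator fun s => ENNReal.ofReal (c * s ^ (c - 1)) := by
    ext s
    simp [indicator_apply]
  rw [hind, setLIntegral_indicator hS]
  rcases eq_or_ne x ∞ with rfl | hx
  · simp only [ofReal_lt_top, ofPred_true, univ_inter]
    rw [lintegral_Ioi_ofReal_mul_rpow_sub_one hc, top_rpow_of_pos hc]
  · have hIoo : {s : ℝ | ENNReal.ofReal s < x} ∩ Ioi 0 = Ioo 0 x.toReal := by
      ext s
      simp only [mem_inter_iff, mem_ofPred_eq, mem_Ioi, mem_Ioo]
      constructor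
      · exact fun ⟨h, hs⟩ => ⟨hs, (ofReal_lt_iff_lt_toReal hs.le hx).1 h⟩
      · exact fun ⟨hs, h⟩ => ⟨(ofReal_lt_iff_lt_toReal hs.le hx).2 h, hs⟩
    rw [hIoo, lintegral_Ioo_ofReal_mul_rpow_sub_one hc toReal_nonneg,
      ← ofReal_rpow_of_nonneg toReal_nonneg hc.le, ofReal_toReal hx]

lemma ofReal_mul_rpow_sub_one {t : ℝ} (ht : 0 < t) :
    ENNReal.ofReal (c * t ^ (c - 1))
      = ENNReal.ofReal c * (ENNReal.ofReal t ^ c * ENNReal.ofReal (1 / t)) := by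
  rw [Real.rpow_sub_one ht.ne', ← mul_one_div, ENNReal.ofReal_mul' (by positivity),
    ENNReal.ofReal_mul (by positivity), ofReal_rpow_of_pos ht]

end PowerIntegrals

section Rearrangement

/-- When `D` is the distribution function of `f`, `rearrangement D` is the decreasing
rearrangement `f^*`. -/
def rearrangement (D : ℝ → ℝ≥0∞) (t : ℝ) : ℝ≥0∞ :=
  volume {s : ℝ | 0 < s ∧ ENNReal.ofReal t < D s}

variable {D : ℝ → ℝ≥0∞} {s t : ℝ}

lemma rearrangement_antitone (D : ℝ → ℝ≥0∞) : Antitone (rearrangement D) := fun _ _ h =>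
  measure_mono fun _ hs => ⟨hs.1, (ENNReal.ofReal_le_ofReal h).trans_lt hs.2⟩

lemma ofReal_le_rearrangement (hD : Antitone D) (h : ENNReal.ofReal t < D s) :
    ENNReal.ofReal s ≤ rearrangement D t := by
  rw [← sub_zero s, ← Real.volume_Ioc]
  exact measure_mono fun x hx => ⟨hx.1, h.trans_le (hD hx.2)⟩

lemma rearrangement_le_ofReal (hD : Antitone D) (h : D s ≤ ENNReal.ofReal t) :
    rearrangement D t ≤ ENNReal.ofReal s := by
  rw [← sub_zero s, ← Real.volume_Ioo]
  exact measure_mono fun x hx =>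
    ⟨hx.1, lt_of_not_ge fun hsx => (hx.2.trans_le ((hD hsx).trans h)).false⟩

lemma lt_of_ofReal_lt_rearrangement (hD : Antitone D) (h : ENNReal.ofReal s < rearrangement D t) :
    ENNReal.ofReal t < D s :=
  lt_of_not_ge fun h' => (rearrangement_le_ofReal hD h').not_gt h

lemma le_of_rearrangement_lt (hD : Antitone D) (h : rearrangement D t < ENNReal.ofReal s) :
    D s ≤ ENNReal.ofReal t :=
  le_of_not_gt fun hlt => (ofReal_le_rearrangement hD hlt).not_gt h

lemma ofReal_lt_rearrangement_iff (hD : Antitone D) (hs : ENNReal.ofReal s ≠ rearrangement D t) :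
    ENNReal.ofReal s < rearrangement D t ↔ ENNReal.ofReal t < D s :=
  ⟨lt_of_ofReal_lt_rearrangement hD, fun h => (ofReal_le_rearrangement hD h).lt_of_ne hs⟩

lemma ae_ofReal_lt_rearrangement_iff (hD : Antitone D) (t : ℝ) :
    ∀ᵐ s ∂volume.restrict (Ioi 0),
      ENNReal.ofReal s < rearrangement D t ↔ ENNReal.ofReal t < D s := by
  have hne : ∀ᵐ s ∂volume, s ∉ ({(rearrangement D t).toReal} : Set ℝ) :=
    measure_eq_zero_iff_ae_notMem.1 (measure_singleton _)
  filter_upwards [ae_restrict_mem measurableSet_Ioi, ae_restrict_of_ae hne] with s hs hsr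
  refine ofReal_lt_rearrangement_iff hD fun h => hsr ?_
  rw [← h, toReal_ofReal (le_of_lt hs), mem_singleton_iff]

/-- Both sides are the integral of `a s^(a-1) b t^(b-1)` over `{(s, t) | t < D s}`, which up to a
null set is `{(s, t) | s < rearrangement D t}`. -/
lemma lintegral_mul_rpow_eq_lintegral_mul_rearrangement_rpow (hD : Antitone D) {a b : ℝ}
    (ha : 0 < a) (hb : 0 < b) :
    ∫⁻ s in Ioi 0, ENNReal.ofReal (a * s ^ (a - 1)) * D s ^ b
      = ∫⁻ t in Ioi 0, ENNReal.ofReal (b * t ^ (b - 1)) * rearrangement D t ^ a := by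
  have hmeas : Measurable (Function.uncurry fun s t : ℝ => ENNReal.ofReal (a * s ^ (a - 1)) *
      if ENNReal.ofReal t < D s then ENNReal.ofReal (b * t ^ (b - 1)) else 0) :=
    (by fun_prop : Measurable fun p : ℝ × ℝ => ENNReal.ofReal (a * p.1 ^ (a - 1))).mul
      (Measurable.ite (measurableSet_lt (by fun_prop) (hD.measurable.comp measurable_fst))
        (by fun_prop) measurable_const)
  calc ∫⁻ s in Ioi 0, ENNReal.ofReal (a * s ^ (a - 1)) * D s ^ b
      = ∫⁻ s in Ioi 0, ∫⁻ t in Ioi 0, ENNReal.ofReal (a * s ^ (a - 1)) *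
          if ENNReal.ofReal t < D s then ENNReal.ofReal (b * t ^ (b - 1)) else 0 := by
        simp_rw [lintegral_const_mul' _ _ ofReal_ne_top, lintegral_Ioi_ite_ofReal_lt hb]
    _ = ∫⁻ t in Ioi 0, ∫⁻ s in Ioi 0, ENNReal.ofReal (a * s ^ (a - 1)) *
          if ENNReal.ofReal t < D s then ENNReal.ofReal (b * t ^ (b - 1)) else 0 :=
        lintegral_lintegral_swap hmeas.aemeasurable
    _ = ∫⁻ t in Ioi 0, ENNReal.ofReal (b * t ^ (b - 1)) * ∫⁻ s in Ioi 0,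
          if ENNReal.ofReal s < rearrangement D t then ENNReal.ofReal (a * s ^ (a - 1)) else 0 := by
        refine lintegral_congr fun t => ?_
        rw [← lintegral_const_mul' _ _ ofReal_ne_top]
        refine lintegral_congr_ae ((ae_ofReal_lt_rearrangement_iff hD t).mono fun s hs => ?_)
        simp only [hs]
        split_ifs <;> simp [mul_comm]
    _ = ∫⁻ t in Ioi 0, ENNReal.ofReal (b * t ^ (b - 1)) * rearrangement D t ^ a := by
        simp_rw [lintegral_Ioi_ite_ofReal_lt ha]

variable {q : ℝ}

lemma lintegral_rpow_mul_rearrangement_rpow (hq : 0 < q) (hD : Antitone D) {a : ℝ} (ha : 0 < a) :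
    ∫⁻ t in Ioi 0, (ENNReal.ofReal t ^ (1 / q) * rearrangement D t) ^ a * ENNReal.ofReal (1 / t)
      = ENNReal.ofReal q *
        ∫⁻ s in Ioi 0, (ENNReal.ofReal s * D s ^ (1 / q)) ^ a * ENNReal.ofReal (1 / s) := by
  have hb : 0 < a / q := div_pos ha hq
  have hL : ∫⁻ s in Ioi 0, ENNReal.ofReal (a * s ^ (a - 1)) * D s ^ (a / q)
      = ENNReal.ofReal a *
        ∫⁻ s in Ioi 0, (ENNReal.ofReal s * D s ^ (1 / q)) ^ a * ENNReal.ofReal (1 / s) := by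
    rw [← lintegral_const_mul' _ _ ofReal_ne_top]
    refine setLIntegral_congr_fun measurableSet_Ioi fun s hs => ?_
    rw [ofReal_mul_rpow_sub_one hs, mul_rpow_of_nonneg _ _ ha.le, ← ENNReal.rpow_mul,
      one_div_mul_eq_div]
    ring
  have hR : ∫⁻ t in Ioi 0, ENNReal.ofReal (a / q * t ^ (a / q - 1)) * rearrangement D t ^ a
      = ENNReal.ofReal (a / q) * ∫⁻ t in Ioi 0,
          (ENNReal.ofReal t ^ (1 / q) * rearrangement D t) ^ a * ENNReal.ofReal (1 / t) := by
    rw [← lintegral_const_mul' _ _ ofReal_ne_top]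
    refine setLIntegral_congr_fun measurableSet_Ioi fun t ht => ?_
    rw [ofReal_mul_rpow_sub_one ht, mul_rpow_of_nonneg _ _ ha.le, ← ENNReal.rpow_mul,
      one_div_mul_eq_div]
    ring
  have key := lintegral_mul_rpow_eq_lintegral_mul_rearrangement_rpow hD ha hb
  rw [hL, hR] at key
  rw [← ENNReal.mul_right_inj (ofReal_pos.2 hb).ne' ofReal_ne_top, ← key, ← mul_assoc,
    ← ENNReal.ofReal_mul hb.le, div_mul_cancel₀ _ hq.ne']

lemma iSup_rpow_mul_rearrangement (hq : 0 < q) (hD : Antitone D) :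
    ⨆ t ∈ Ioi (0 : ℝ), ENNReal.ofReal t ^ (1 / q) * rearrangement D t
      = ⨆ s ∈ Ioi (0 : ℝ), ENNReal.ofReal s * D s ^ (1 / q) := by
  apply le_antisymm
  · refine iSup₂_le fun t _ => mul_le_of_forall_lt fun x hx y hy => ?_
    rcases eq_or_ne y 0 with rfl | hy0
    · simp
    obtain ⟨s, rfl⟩ : ∃ s, y = ENNReal.ofReal s := ⟨y.toReal, (ofReal_toReal hy.ne_top).symm⟩
    have hs : 0 < s := ofReal_pos.1 (pos_iff_ne_zero.2 hy0)
    have hDs := lt_of_ofReal_lt_rearrangement hD hy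
    calc x * ENNReal.ofReal s ≤ ENNReal.ofReal s * D s ^ (1 / q) := by
          rw [mul_comm]
          gcongr
          exact hx.le.trans (rpow_le_rpow hDs.le (by positivity))
      _ ≤ _ := le_iSup₂ (f := fun s (_ : s ∈ Ioi (0 : ℝ)) => ENNReal.ofReal s * D s ^ (1 / q)) _ hs
  · refine iSup₂_le fun s _ => mul_le_of_forall_lt fun x hx y hy => ?_
    rcases eq_or_ne y 0 with rfl | hy0
    · simp
    have hyq : y ^ q < D s := by
      simpa [← ENNReal.rpow_mul, hq.ne'] using rpow_lt_rpow hy hq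
    have ht : 0 < (y ^ q).toReal := toReal_pos (by simp [hy0, hq.le]) hyq.ne_top
    have hy_eq : y = ENNReal.ofReal (y ^ q).toReal ^ (1 / q) := by
      rw [ofReal_toReal hyq.ne_top, ← ENNReal.rpow_mul, mul_one_div_cancel hq.ne', rpow_one]
    rw [← ofReal_toReal hyq.ne_top] at hyq
    calc x * y ≤ ENNReal.ofReal (y ^ q).toReal ^ (1 / q) * rearrangement D (y ^ q).toReal := by
          rw [mul_comm, ← hy_eq]
          gcongr
          exact hx.le.trans (ofReal_le_rearrangement hD hyq)
      _ ≤ _ := le_iSup₂ (f := fun t (_ : t ∈ Ioi (0 : ℝ)) =>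
          ENNReal.ofReal t ^ (1 / q) * rearrangement D t) _ ht

lemma haarLpNorm_rpow_mul_rearrangement (hq : 0 < q) (hD : Antitone D) (α : ℝ≥0∞) :
    haarLpNorm α (fun t => ENNReal.ofReal t ^ (1 / q) * rearrangement D t)
      = ENNReal.ofReal q ^ (1 / α.toReal) *
        haarLpNorm α (fun s => ENNReal.ofReal s * D s ^ (1 / q)) := by
  rcases eq_or_ne α ∞ with rfl | hα
  · rw [haarLpNorm_top, haarLpNorm_top, iSup_rpow_mul_rearrangement hq hD]
    simp
  rcases eq_or_ne α 0 with rfl | hα₀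
  · simp [haarLpNorm_of_ne_top]
  rw [haarLpNorm_of_ne_top hα, haarLpNorm_of_ne_top hα,
    lintegral_rpow_mul_rearrangement_rpow hq hD (toReal_pos hα₀ hα),
    mul_rpow_of_nonneg _ _ (by positivity)]

end Rearrangement

section Distribution

variable {Ω : Type*} [MeasurableSpace Ω]

def distribution {E : Type*} [Norm E] (μ : Measure Ω) (f : Ω → E) (s : ℝ) : ℝ≥0∞ :=
  μ {ω | s < ‖f ω‖}

variable {μ : Measure Ω}

lemma distribution_antitone {E : Type*} [Norm E] (f : Ω → E) : Antitone (distribution μ f) :=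
  fun _ _ h => measure_mono fun _ hω => h.trans_lt hω

lemma distribution_zero_le {E : Type*} [Norm E] {f : Ω → E} {c : ℝ≥0∞}
    (h : ∀ s, 0 < s → distribution μ f s ≤ c) : distribution μ f 0 ≤ c := by
  have hunion : {ω | 0 < ‖f ω‖} = ⋃ n : ℕ, {ω | 1 / ((n : ℝ) + 1) < ‖f ω‖} := by
    ext ω
    simp only [mem_ofPred_eq, mem_iUnion]
    exact ⟨exists_nat_one_div_lt, fun ⟨n, hn⟩ => lt_trans (by positivity) hn⟩
  have hmono : Monotone fun n : ℕ => {ω | 1 / ((n : ℝ) + 1) < ‖f ω‖} := by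
    intro n m hnm ω hω
    simp only [mem_ofPred_eq] at hω ⊢
    exact (Nat.one_div_le_one_div hnm).trans_lt hω
  change μ {ω | 0 < ‖f ω‖} ≤ c
  rw [hunion, hmono.measure_iUnion]
  exact iSup_le fun n => h _ (by positivity)

lemma distribution_zero_le_of_rearrangement_eq_zero {E : Type*} [Norm E] {f : Ω → E} {s : ℝ}
    (h : rearrangement (distribution μ f) s = 0) : distribution μ f 0 ≤ ENNReal.ofReal s :=
  distribution_zero_le fun _ hu =>
    le_of_rearrangement_lt (distribution_antitone f) (h ▸ ofReal_pos.2 hu)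

variable {R : Type*} [SeminormedRing R] {f g : Ω → R}

lemma distribution_mul_le {u v : ℝ} (hu : 0 ≤ u) :
    distribution μ (f * g) (u * v) ≤ distribution μ f u + distribution μ g v := by
  refine (measure_mono fun ω hω => ?_).trans (measure_union_le _ _)
  by_contra hω'
  simp only [mem_union, mem_ofPred_eq, not_or, not_lt] at hω'
  exact (hω : u * v < ‖f ω * g ω‖).not_ge
    ((norm_mul_le _ _).trans (mul_le_mul hω'.1 hω'.2 (norm_nonneg _) hu))

lemma distribution_mul_zero_le_left : distribution μ (f * g) 0 ≤ distribution μ f 0 :=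
  measure_mono fun ω (hω : 0 < ‖f ω * g ω‖) => lt_of_not_ge fun h =>
    hω.not_ge ((norm_mul_le _ _).trans (mul_nonpos_of_nonpos_of_nonneg h (norm_nonneg _)))

lemma distribution_mul_zero_le_right : distribution μ (f * g) 0 ≤ distribution μ g 0 :=
  measure_mono fun ω (hω : 0 < ‖f ω * g ω‖) => lt_of_not_ge fun h =>
    hω.not_ge ((norm_mul_le _ _).trans (mul_nonpos_of_nonneg_of_nonpos (norm_nonneg _) h))

lemma rearrangement_distribution_mul_le {s₁ s₂ : ℝ} (hs₁ : 0 ≤ s₁) (hs₂ : 0 ≤ s₂) :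
    rearrangement (distribution μ (f * g)) (s₁ + s₂)
      ≤ rearrangement (distribution μ f) s₁ * rearrangement (distribution μ g) s₂ := by
  have hfg := distribution_antitone (μ := μ) (f * g)
  have hzero : distribution μ (f * g) 0 ≤ ENNReal.ofReal (s₁ + s₂) →
      rearrangement (distribution μ (f * g)) (s₁ + s₂) = 0 := fun h => by
    simpa using rearrangement_le_ofReal hfg h
  -- `f^*(s₁) = 0` forces `μ {f ≠ 0} ≤ s₁` by right continuity of the distribution function at `0`;
  -- this settles the products `0 * ∞`, where approximating from above is impossible.
  rcases eq_or_ne (rearrangement (distribution μ f) s₁) 0 with hA | hA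
  · rw [hzero (distribution_mul_zero_le_left.trans
      ((distribution_zero_le_of_rearrangement_eq_zero hA).trans (by gcongr; linarith)))]
    exact zero_le
  rcases eq_or_ne (rearrangement (distribution μ g) s₂) 0 with hB | hB
  · rw [hzero (distribution_mul_zero_le_right.trans
      ((distribution_zero_le_of_rearrangement_eq_zero hB).trans (by gcongr; linarith)))]
    exact zero_le
  refine le_mul_of_forall_lt (Or.inl hA) (Or.inr hB) fun x hx y hy => ?_
  rcases eq_or_ne x ∞ with rfl | hx'
  · simp [(pos_of_gt hy).ne']
  rcases eq_or_ne y ∞ with rfl | hy'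
  · simp [(pos_of_gt hx).ne']
  calc rearrangement (distribution μ (f * g)) (s₁ + s₂)
      ≤ ENNReal.ofReal (x.toReal * y.toReal) := by
        refine rearrangement_le_ofReal hfg ((distribution_mul_le toReal_nonneg).trans ?_)
        rw [ENNReal.ofReal_add hs₁ hs₂]
        exact add_le_add
          (le_of_rearrangement_lt (distribution_antitone f) (by rwa [ofReal_toReal hx']))
          (le_of_rearrangement_lt (distribution_antitone g) (by rwa [ofReal_toReal hy']))
    _ = x * y := by rw [ENNReal.ofReal_mul toReal_nonneg, ofReal_toReal hx', ofReal_toReal hy']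

end Distribution

section LorentzNorm

variable {Ω : Type*} [MeasurableSpace Ω]

lemma lorentzNorm_eq_haarLpNorm (μ : Measure Ω) (q : ℝ) (α : ℝ≥0∞) (f : Ω → ℂ) :
    lorentzNorm μ q α f
      = haarLpNorm α (fun s => ENNReal.ofReal s * distribution μ f s ^ (1 / q)) :=
  rfl

lemma lorentzNorm_eq_haarLpNorm_rearrangement (μ : Measure Ω) {q : ℝ} (hq : 0 < q) (α : ℝ≥0∞)
    (f : Ω → ℂ) :
    ENNReal.ofReal q ^ (1 / α.toReal) * lorentzNorm μ q α f
      = haarLpNorm α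
          (fun t => ENNReal.ofReal t ^ (1 / q) * rearrangement (distribution μ f) t) := by
  rw [lorentzNorm_eq_haarLpNorm, haarLpNorm_rpow_mul_rearrangement hq (distribution_antitone f)]

lemma ofReal_rpow_mul_rearrangement_mul_le (μ : Measure Ω) {q q₁ q₂ : ℝ} (hq₁ : 0 < q₁)
    (hq₂ : 0 < q₂) (hqe : 1 / q = 1 / q₁ + 1 / q₂) (f g : Ω → ℂ) {t : ℝ} (ht : 0 < t) :
    ENNReal.ofReal t ^ (1 / q) * rearrangement (distribution μ (f * g)) t
      ≤ ENNReal.ofReal 2 ^ (1 / q) *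
        ((ENNReal.ofReal (2⁻¹ * t) ^ (1 / q₁) * rearrangement (distribution μ f) (2⁻¹ * t)) *
          (ENNReal.ofReal (2⁻¹ * t) ^ (1 / q₂) * rearrangement (distribution μ g) (2⁻¹ * t))) := by
  have hq : 0 < q := one_div_pos.1 (hqe ▸ by positivity)
  have hsplit : ENNReal.ofReal t ^ (1 / q) = ENNReal.ofReal 2 ^ (1 / q) *
      (ENNReal.ofReal (2⁻¹ * t) ^ (1 / q₁) * ENNReal.ofReal (2⁻¹ * t) ^ (1 / q₂)) := by
    rw [← rpow_add _ _ (by simp [ht]) ofReal_ne_top, ← hqe,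
      ← mul_rpow_of_nonneg _ _ (by positivity), ← ENNReal.ofReal_mul (by norm_num),
      mul_inv_cancel_left₀ two_ne_zero]
  calc ENNReal.ofReal t ^ (1 / q) * rearrangement (distribution μ (f * g)) t
      = ENNReal.ofReal 2 ^ (1 / q) *
          (ENNReal.ofReal (2⁻¹ * t) ^ (1 / q₁) * ENNReal.ofReal (2⁻¹ * t) ^ (1 / q₂)) *
          rearrangement (distribution μ (f * g)) (2⁻¹ * t + 2⁻¹ * t) := by
        rw [hsplit, ← two_mul, mul_inv_cancel_left₀ two_ne_zero]
    _ ≤ ENNReal.ofReal 2 ^ (1 / q) *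
          (ENNReal.ofReal (2⁻¹ * t) ^ (1 / q₁) * ENNReal.ofReal (2⁻¹ * t) ^ (1 / q₂)) *
          (rearrangement (distribution μ f) (2⁻¹ * t) *
            rearrangement (distribution μ g) (2⁻¹ * t)) := by
        gcongr
        exact rearrangement_distribution_mul_le (by positivity) (by positivity)
    _ = _ := by ring

theorem rpow_mul_lorentzNorm_mul_le (μ : Measure Ω) {q q₁ q₂ : ℝ} {α α₁ α₂ : ℝ≥0∞}
    (hq₁ : 0 < q₁) (hq₂ : 0 < q₂) (hα₁ : α₁ ≠ 0) (hα₂ : α₂ ≠ 0)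
    (hqe : 1 / q = 1 / q₁ + 1 / q₂) (hαe : 1 / α = 1 / α₁ + 1 / α₂) (f g : Ω → ℂ) :
    ENNReal.ofReal q ^ (1 / α.toReal) * lorentzNorm μ q α (f * g)
      ≤ ENNReal.ofReal 2 ^ (1 / q) *
        ((ENNReal.ofReal q₁ ^ (1 / α₁.toReal) * lorentzNorm μ q₁ α₁ f) *
          (ENNReal.ofReal q₂ ^ (1 / α₂.toReal) * lorentzNorm μ q₂ α₂ g)) := by
  have hq : 0 < q := one_div_pos.1 (hqe ▸ by positivity)
  have hα : α ≠ 0 := by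
    rintro rfl
    simp only [one_div, ENNReal.inv_zero] at hαe
    exact add_ne_top.2 ⟨inv_ne_top.2 hα₁, inv_ne_top.2 hα₂⟩ hαe.symm
  set F₁ := fun t => ENNReal.ofReal t ^ (1 / q₁) * rearrangement (distribution μ f) t
  set F₂ := fun t => ENNReal.ofReal t ^ (1 / q₂) * rearrangement (distribution μ g) t
  have hF₁ : Measurable F₁ := by
    have := (rearrangement_antitone (distribution μ f)).measurable
    fun_prop
  have hF₂ : Measurable F₂ := by
    have := (rearrangement_antitone (distribution μ g)).measurable
    fun_prop
  rw [lorentzNorm_eq_haarLpNorm_rearrangement μ hq, lorentzNorm_eq_haarLpNorm_rearrangement μ hq₁,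
    lorentzNorm_eq_haarLpNorm_rearrangement μ hq₂]
  calc haarLpNorm α (fun t => ENNReal.ofReal t ^ (1 / q) *
          rearrangement (distribution μ (f * g)) t)
      ≤ haarLpNorm α (fun t => ENNReal.ofReal 2 ^ (1 / q) * (F₁ * F₂) (2⁻¹ * t)) :=
        haarLpNorm_mono fun t ht => ofReal_rpow_mul_rearrangement_mul_le μ hq₁ hq₂ hqe f g ht
    _ = ENNReal.ofReal 2 ^ (1 / q) * haarLpNorm α (F₁ * F₂) := by
        have hG : Measurable fun t => (F₁ * F₂) (2⁻¹ * t) :=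
          (hF₁.mul hF₂).comp (measurable_const_mul _)
        rw [haarLpNorm_const_mul hα hG, haarLpNorm_comp_mul_left (by norm_num)]
    _ ≤ ENNReal.ofReal 2 ^ (1 / q) * (haarLpNorm α₁ F₁ * haarLpNorm α₂ F₂) := by
        gcongr
        exact haarLpNorm_mul_le hα₁ hα₂ hαe hF₁ hF₂

end LorentzNorm

end Lorentz

open Lorentz

theorem lorentz_holder_general
    (q q₁ q₂ : ℝ) (α α₁ α₂ : ℝ≥0∞)
    (hq : 1 ≤ q) (hq₁ : 1 ≤ q₁) (hq₂ : 1 ≤ q₂)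
    (hα₁ : 1 ≤ α₁) (hα₂ : 1 ≤ α₂)
    (hqe : 1 / q = 1 / q₁ + 1 / q₂) (hαe : 1 / α = 1 / α₁ + 1 / α₂) :
    ∃ C : ℝ, 0 < C ∧
      ∀ (Ω : Type*) [MeasurableSpace Ω] (μ : Measure Ω) [SigmaFinite μ]
        (f g : Ω → ℂ), Measurable f → Measurable g →
        lorentzNorm μ q α (fun ω => f ω * g ω)
          ≤ ENNReal.ofReal C * (lorentzNorm μ q₁ α₁ f * lorentzNorm μ q₂ α₂ g) := by
  have hq₁' : 0 < q₁ := by linarith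
  have hq₂' : 0 < q₂ := by linarith
  refine ⟨2 ^ (1 / q) * q₁ ^ (1 / α₁.toReal) * q₂ ^ (1 / α₂.toReal), by positivity, ?_⟩
  intro Ω _ μ _ f g _ _
  have hCq : (1 : ℝ≥0∞) ≤ ENNReal.ofReal q ^ (1 / α.toReal) := by
    simpa using rpow_le_rpow_of_exponent_le (one_le_ofReal.2 hq)
      (by positivity : (0 : ℝ) ≤ 1 / α.toReal)
  calc lorentzNorm μ q α (fun ω => f ω * g ω)
      ≤ ENNReal.ofReal q ^ (1 / α.toReal) * lorentzNorm μ q α (f * g) :=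
        le_mul_of_one_le_left' hCq
    _ ≤ _ := rpow_mul_lorentzNorm_mul_le μ hq₁' hq₂'
        (zero_lt_one.trans_le hα₁).ne' (zero_lt_one.trans_le hα₂).ne' hqe hαe f g
    _ = _ := by
        rw [ENNReal.ofReal_mul (by positivity), ENNReal.ofReal_mul (by positivity),
          ← ofReal_rpow_of_nonneg zero_le_two (by positivity),
          ← ofReal_rpow_of_nonneg hq₁'.le (by positivity),
          ← ofReal_rpow_of_nonneg hq₂'.le (by positivity)]
        ring

/-- Hölder's inequality in Lorentz spaces: if `1/q = 1/q₁ + 1/q₂` and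
`1/α = 1/α₁ + 1/α₂`, then `‖fg‖_{L^{q,α}} ≤ C ‖f‖_{L^{q₁,α₁}} ‖g‖_{L^{q₂,α₂}}` with a
constant depending only on the exponents. -/
theorem lorentz_holder
    (q q₁ q₂ : ℝ) (α α₁ α₂ : ℝ≥0∞)
    (hq : 1 ≤ q) (hq₁ : 1 ≤ q₁) (hq₂ : 1 ≤ q₂)
    (hα : 1 ≤ α) (hα₁ : 1 ≤ α₁) (hα₂ : 1 ≤ α₂)
    (hqe : 1 / q = 1 / q₁ + 1 / q₂) (hαe : 1 / α = 1 / α₁ + 1 / α₂) :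
    ∃ C : ℝ, 0 < C ∧
      ∀ (Ω : Type*) [MeasurableSpace Ω] (μ : Measure Ω) [SigmaFinite μ]
        (f g : Ω → ℂ), Measurable f → Measurable g →
        lorentzNorm μ q α (fun ω => f ω * g ω)
          ≤ ENNReal.ofReal C * (lorentzNorm μ q₁ α₁ f * lorentzNorm μ q₂ α₂ g) :=
  lorentz_holder_general q q₁ q₂ α α₁ α₂ hq hq₁ hq₂ hα₁ hα₂ hqe hαe

end
end
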